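/- arXiv:1112.2191 — 2 statements merged into one kernel-verified Lean document; each statement's English description precedes it below -/
import Mathlib

section
/- Abstract dualizability lemma: Let C be a symmetric monoidal category with an involutive monoidal functor a : C → C fixing the unit, and let (L, 𝔎) : C → D^b(k) be a symmetric monoidal functor equipped with composition morphisms ∪ and diagonal classes L_{Δ_X} : k → L(X ⊗ X^a) satisfying properties (P1)–(P5). Then for every object X, the object L(X^a) is a dual of L(X) in D^b(k), with coevaluation η = 𝔎^{−1} ∘ L_{Δ_X} : k → L(X) ⊗^L L(X^a) and evaluation ε = ∪_X : L(X^a) ⊗^L L(X) → k. -/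
open CategoryTheory MonoidalCategory Category

universe v₁ v₂ u₁ u₂

variable (C : Type u₁) (D : Type u₂) [Category.{v₁} C] [Category.{v₂} D]
  [MonoidalCategory C] [SymmetricCategory C] [MonoidalCategory D] [SymmetricCategory D]

/-- The data of the general framework of Section 2 of Petit's paper: a symmetric
monoidal category `C`, an involutive monoidal functor `(·)^a` fixing the unit (we
record its action on objects, strictly), a symmetric monoidal functor
`(L, 𝔎) = (F, μ F)` from `C` to a symmetric monoidal category `D` (playing the role of
`D^b(k)` for a Noetherian commutative ring `k` of finite cohomological dimension),
composition morphisms `∪` and diagonal classes `L_{Δ_X}`. -/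
structure LLData where
  /-- the functor `L` (with `𝔎 = Functor.LaxMonoidal.μ F`) -/
  F : C ⥤ D
  /-- `L` is symmetric monoidal -/
  [FBr : F.Braided]
  /-- the involution `(·)^a` on objects, fixing the unit and compatible with `⊗` -/
  a : C → C
  ha1 : a (𝟙_ C) = 𝟙_ C
  hamul : ∀ X Y : C, a (X ⊗ Y) = a X ⊗ a Y
  haa : ∀ X : C, a (a X) = X
  /-- the composition `∪₂ : L(X₁ ⊗ X₂^a) ⊗ L(X₂ ⊗ X₃^a) ⟶ L(X₁ ⊗ X₃^a)` -/
  cup : ∀ X₁ X₂ X₃ : C, F.obj (X₁ ⊗ a X₂) ⊗ F.obj (X₂ ⊗ a X₃) ⟶ F.obj (X₁ ⊗ a X₃)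
  /-- the diagonal class `L_{Δ_X} : k ⟶ L(X ⊗ X^a)` -/
  LΔ : ∀ X : C, 𝟙_ D ⟶ F.obj (X ⊗ a X)

attribute [instance] LLData.FBr

variable {C D}

namespace LLData

variable (S : LLData C D)

/-- the identification `L(X) ⟶ L(X ⊗ 𝟙^a)` -/
def r (X : C) : S.F.obj X ⟶ S.F.obj (X ⊗ S.a (𝟙_ C)) :=
  S.F.map ((ρ_ X).inv ≫ (X ◁ eqToHom S.ha1.symm))

/-- the identification `L(X ⊗ 𝟙^a) ⟶ L(X)` -/
def rInv (X : C) : S.F.obj (X ⊗ S.a (𝟙_ C)) ⟶ S.F.obj X :=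
  S.F.map ((X ◁ eqToHom S.ha1) ≫ (ρ_ X).hom)

/-- the identification `L(X^a) ⟶ L(𝟙 ⊗ X^a)` -/
def l (X : C) : S.F.obj (S.a X) ⟶ S.F.obj (𝟙_ C ⊗ S.a X) :=
  S.F.map (λ_ (S.a X)).inv

/-- the identification `L(𝟙 ⊗ X^a) ⟶ L(X^a)` -/
def lInv (X : C) : S.F.obj (𝟙_ C ⊗ S.a X) ⟶ S.F.obj (S.a X) :=
  S.F.map (λ_ (S.a X)).hom

/-- the identification `L(𝟙 ⊗ 𝟙^a) ⟶ k` -/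
def toUnit : S.F.obj (𝟙_ C ⊗ S.a (𝟙_ C)) ⟶ 𝟙_ D :=
  S.F.map ((𝟙_ C ◁ eqToHom S.ha1) ≫ (ρ_ (𝟙_ C)).hom) ≫ (Functor.Monoidal.εIso S.F).inv

/-- `∪_X : L(X ⊗ X^a) ⊗ L(X) ⟶ L(X)` (composition over the second slot `X`) -/
def cupX (X : C) : S.F.obj (X ⊗ S.a X) ⊗ S.F.obj X ⟶ S.F.obj X :=
  (S.F.obj (X ⊗ S.a X) ◁ S.r X) ≫ S.cup X X (𝟙_ C) ≫ S.rInv X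

/-- `∪_{X^a} : L(X^a) ⊗ L(X ⊗ X^a) ⟶ L(X^a)` -/
def cupXa (X : C) : S.F.obj (S.a X) ⊗ S.F.obj (X ⊗ S.a X) ⟶ S.F.obj (S.a X) :=
  (S.l X ▷ S.F.obj (X ⊗ S.a X)) ≫ S.cup (𝟙_ C) X X ≫ S.lInv X

/-- the evaluation `∪_X : L(X^a) ⊗ L(X) ⟶ k` -/
def ev (X : C) : S.F.obj (S.a X) ⊗ S.F.obj X ⟶ 𝟙_ D :=
  (S.l X ⊗ₘ S.r X) ≫ S.cup (𝟙_ C) X (𝟙_ C) ≫ S.toUnit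

/-- the coevaluation `η = 𝔎⁻¹ ∘ L_{Δ_X} : k ⟶ L(X) ⊗ L(X^a)` -/
def coev (X : C) : 𝟙_ D ⟶ S.F.obj X ⊗ S.F.obj (S.a X) :=
  S.LΔ X ≫ (Functor.Monoidal.μIso S.F X (S.a X)).inv

theorem pairEq (X : C) : X ⊗ S.a X = S.a (S.a X ⊗ X) := by rw [S.hamul, S.haa]

/-- the pairing `∪_{X^a ⊗ X} : L(X ⊗ X^a) ⊗ L(X^a ⊗ X) ⟶ k` -/
def cupPair (X : C) : S.F.obj (X ⊗ S.a X) ⊗ S.F.obj (S.a X ⊗ X) ⟶ 𝟙_ D :=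
  (S.F.map ((λ_ (X ⊗ S.a X)).inv ≫ (𝟙_ C ◁ eqToHom (S.pairEq X))) ⊗ₘ S.r (S.a X ⊗ X)) ≫
    S.cup (𝟙_ C) (S.a X ⊗ X) (𝟙_ C) ≫ S.toUnit

/-- the morphism `Φ_λ : L(X) ⟶ L(X)` induced by a class `λ : k ⟶ L(X ⊗ X^a)` -/
def Φ (X : C) (lam : 𝟙_ D ⟶ S.F.obj (X ⊗ S.a X)) : S.F.obj X ⟶ S.F.obj X :=
  (λ_ (S.F.obj X)).inv ≫ (lam ▷ S.F.obj X) ≫ S.cupX X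

/-- the categorical trace in `D` of `f : L(X) ⟶ L(X)`, computed with the dual `L(X^a)` -/
def tr (X : C) (f : S.F.obj X ⟶ S.F.obj X) : 𝟙_ D ⟶ 𝟙_ D :=
  S.coev X ≫ (f ▷ S.F.obj (S.a X)) ≫ (β_ (S.F.obj X) (S.F.obj (S.a X))).hom ≫ S.ev X

/-- Property (P6): compatibility of the pairing with the symmetry. -/
def P6 : Prop := ∀ X₁ X₂ : C,
  (S.F.map (eqToHom (S.hamul X₂ X₁) ≫ (β_ (S.a X₂) (S.a X₁)).hom ≫
      eqToHom (S.hamul X₁ X₂).symm) ⊗ₘ S.F.map (β_ X₂ X₁).hom) ≫ S.ev (X₁ ⊗ X₂)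
    = S.ev (X₂ ⊗ X₁)

end LLData

variable (C D)

/-- The general framework of Section 2 of the paper: the data above together with
properties (P1)–(P5). -/
structure LLFramework extends LLData C D where
  /-- (P1): the composition over the unit object agrees with `𝔎` -/
  P1 : ∀ X₁ X₃ : C,
    (toLLData.r X₁ ⊗ₘ toLLData.l X₃) ≫ toLLData.cup X₁ (𝟙_ C) X₃
      = Functor.LaxMonoidal.μ toLLData.F X₁ (toLLData.a X₃)
  /-- (P2): associativity of `∪` -/
  P2 : ∀ X₁ X₂ X₃ X₄ : C,
    (toLLData.cup X₁ X₂ X₃ ▷ toLLData.F.obj (X₃ ⊗ toLLData.a X₄)) ≫ toLLData.cup X₁ X₃ X₄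
      = (α_ _ _ _).hom ≫ (toLLData.F.obj (X₁ ⊗ toLLData.a X₂) ◁ toLLData.cup X₂ X₃ X₄) ≫
          toLLData.cup X₁ X₂ X₄
  /-- (P3): `L(σ) ∘ L_{Δ_X} = L_{Δ_{X^a}}` -/
  P3 : ∀ X : C,
    toLLData.LΔ X ≫ toLLData.F.map (β_ X (toLLData.a X)).hom
      = toLLData.LΔ (toLLData.a X) ≫ toLLData.F.map (eqToHom (by rw [toLLData.haa]))
  /-- (P4), first half: `∪_X ∘ (L_{Δ_X} ⊗ id) = id` on `L(X)` -/
  P4l : ∀ X : C,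
    (λ_ (toLLData.F.obj X)).inv ≫ (toLLData.LΔ X ▷ toLLData.F.obj X) ≫ toLLData.cupX X
      = 𝟙 (toLLData.F.obj X)
  /-- (P4), second half: `∪_{X^a} ∘ (id ⊗ L_{Δ_X}) = id` on `L(X^a)` -/
  P4r : ∀ X : C,
    (ρ_ (toLLData.F.obj (toLLData.a X))).inv ≫
        (toLLData.F.obj (toLLData.a X) ◁ toLLData.LΔ X) ≫ toLLData.cupXa X
      = 𝟙 (toLLData.F.obj (toLLData.a X))
  /-- (P5): the pairing diagram, `∪_{X^a ⊗ X} ∘ (L_{Δ_X} ⊗ 𝔎) = ∪_X` -/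
  P5 : ∀ X : C,
    (λ_ (toLLData.F.obj (toLLData.a X) ⊗ toLLData.F.obj X)).inv ≫
        (toLLData.LΔ X ⊗ₘ Functor.LaxMonoidal.μ toLLData.F (toLLData.a X) X) ≫
        toLLData.cupPair X
      = toLLData.ev X

variable {C D}

section Aux

open Functor.LaxMonoidal Functor.Monoidal

omit [SymmetricCategory C] in
lemma unit_coh {A : C} (h : A = 𝟙_ C) :
    (λ_ A).inv ≫ (𝟙_ C ◁ eqToHom h) ≫ (ρ_ (𝟙_ C)).hom = eqToHom h := by
  subst h; simp [← unitors_equal]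

variable (S : LLFramework C D) (X : C)

lemma l_unit_toUnit :
    S.toLLData.l (𝟙_ C) ≫ S.toLLData.toUnit
      = S.F.map (eqToHom S.ha1) ≫ (εIso S.F).inv := by
  simp only [LLData.l, LLData.toUnit, ← Functor.map_comp_assoc]
  rw [unit_coh]

lemma r_unit_toUnit :
    S.toLLData.r (𝟙_ C) ≫ S.toLLData.toUnit = (εIso S.F).inv := by
  simp only [LLData.r, LLData.toUnit, ← Functor.map_comp_assoc]
  simp

lemma isIso_l : IsIso (S.toLLData.l X) := by unfold LLData.l; infer_instance
lemma isIso_r : IsIso (S.toLLData.r X) := by unfold LLData.r; infer_instance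

lemma lemA :
    (S.toLLData.r X ▷ S.F.obj (𝟙_ C ⊗ S.a (𝟙_ C))) ≫ S.cup X (𝟙_ C) (𝟙_ C) ≫
        S.toLLData.rInv X
      = (S.F.obj X ◁ S.toLLData.toUnit) ≫ (ρ_ (S.F.obj X)).hom := by
  haveI := isIso_l S (𝟙_ C)
  rw [← cancel_epi (S.F.obj X ◁ S.toLLData.l (𝟙_ C))]
  have h1 : (S.F.obj X ◁ S.toLLData.l (𝟙_ C)) ≫
      (S.toLLData.r X ▷ S.F.obj (𝟙_ C ⊗ S.a (𝟙_ C)))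
      = S.toLLData.r X ⊗ₘ S.toLLData.l (𝟙_ C) := (tensorHom_def' _ _).symm
  rw [← assoc, h1, ← assoc, S.P1]
  rw [← MonoidalCategory.whiskerLeft_comp_assoc, l_unit_toUnit S]
  simp only [LLData.rInv, Functor.map_comp, MonoidalCategory.whiskerLeft_comp, assoc]
  rw [← μ_natural_right_assoc]
  have h2 : μ S.F X (𝟙_ C) ≫ S.F.map (ρ_ X).hom
      = (S.F.obj X ◁ (εIso S.F).inv) ≫ (ρ_ (S.F.obj X)).hom := by
    rw [right_unitality (F := S.F) X, ← MonoidalCategory.whiskerLeft_comp_assoc]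
    simp
  rw [h2]

lemma lemB :
    (S.F.obj (𝟙_ C ⊗ S.a (𝟙_ C)) ◁ S.toLLData.l X) ≫ S.cup (𝟙_ C) (𝟙_ C) X ≫
        S.toLLData.lInv X
      = (S.toLLData.toUnit ▷ S.F.obj (S.a X)) ≫ (λ_ (S.F.obj (S.a X))).hom := by
  haveI := isIso_r S (𝟙_ C)
  rw [← cancel_epi (S.toLLData.r (𝟙_ C) ▷ S.F.obj (S.a X))]
  have h1 : (S.toLLData.r (𝟙_ C) ▷ S.F.obj (S.a X)) ≫
      (S.F.obj (𝟙_ C ⊗ S.a (𝟙_ C)) ◁ S.toLLData.l X)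
      = S.toLLData.r (𝟙_ C) ⊗ₘ S.toLLData.l X := (MonoidalCategory.tensorHom_def _ _).symm
  rw [← assoc, h1, ← assoc, S.P1]
  rw [← comp_whiskerRight_assoc, r_unit_toUnit S]
  have h2 : μ S.F (𝟙_ C) (S.a X) ≫ S.toLLData.lInv X
      = ((εIso S.F).inv ▷ S.F.obj (S.a X)) ≫ (λ_ (S.F.obj (S.a X))).hom := by
    rw [LLData.lInv, left_unitality (F := S.F) (S.a X), ← comp_whiskerRight_assoc]
    simp
  rw [h2]

lemma claim1 :
    (α_ (S.F.obj X) (S.F.obj (S.a X)) (S.F.obj X)).hom ≫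
        (S.F.obj X ◁ S.toLLData.ev X) ≫ (ρ_ (S.F.obj X)).hom
      = (μ S.F X (S.a X) ▷ S.F.obj X) ≫ S.toLLData.cupX X := by
  rw [← S.P1, LLData.cupX, comp_whiskerRight_assoc, ← whisker_exchange_assoc,
    reassoc_of% (S.P2 X (𝟙_ C) X (𝟙_ C)), ← tensorHom_def_assoc,
    associator_naturality_assoc, ← cancel_epi (α_ (S.F.obj X) (S.F.obj (S.a X)) (S.F.obj X)).inv,
    Iso.inv_hom_id_assoc, Iso.inv_hom_id_assoc, tensorHom_def'_assoc,
    ← whisker_exchange_assoc, lemA S X]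
  simp only [LLData.ev, MonoidalCategory.whiskerLeft_comp, assoc] -- MAIN

lemma claim2 :
    (α_ (S.F.obj (S.a X)) (S.F.obj X) (S.F.obj (S.a X))).inv ≫
        (S.toLLData.ev X ▷ S.F.obj (S.a X)) ≫ (λ_ (S.F.obj (S.a X))).hom
      = (S.F.obj (S.a X) ◁ μ S.F X (S.a X)) ≫ S.toLLData.cupXa X := by
  have h2 : (S.F.obj (𝟙_ C ⊗ S.a X) ◁ S.cup X (𝟙_ C) X) ≫ S.cup (𝟙_ C) X X
      = (α_ _ _ _).inv ≫ (S.cup (𝟙_ C) X (𝟙_ C) ▷ S.F.obj (𝟙_ C ⊗ S.a X)) ≫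
          S.cup (𝟙_ C) (𝟙_ C) X := by
    rw [S.P2, Iso.inv_hom_id_assoc]
  rw [← S.P1, LLData.cupXa, MonoidalCategory.whiskerLeft_comp_assoc,
    whisker_exchange_assoc, reassoc_of% h2, ← tensorHom_def'_assoc,
    associator_inv_naturality_assoc,
    ← cancel_epi (α_ (S.F.obj (S.a X)) (S.F.obj X) (S.F.obj (S.a X))).hom,
    Iso.hom_inv_id_assoc, Iso.hom_inv_id_assoc, tensorHom_def_assoc,
    whisker_exchange_assoc, lemB S X]
  simp only [LLData.ev, comp_whiskerRight, assoc] -- MAIN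

end Aux

/-!
STATEMENT 11 (Lemma 2.8 of the paper): given the framework with properties (P1)–(P5),
for every object `X`, the object `L(X^a)` is a dual of `L(X)`, with coevaluation
`η = 𝔎⁻¹ ∘ L_{Δ_X}` and evaluation `ε = ∪_X : L(X^a) ⊗ L(X) ⟶ k`, i.e. the two
triangle identities hold.
-/
theorem lefschetz_lunts_stmt11 (S : LLFramework C D) (X : C) :
    ((λ_ (S.F.obj X)).inv ≫ (S.toLLData.coev X ▷ S.F.obj X) ≫
        (α_ (S.F.obj X) (S.F.obj (S.a X)) (S.F.obj X)).hom ≫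
        (S.F.obj X ◁ S.toLLData.ev X) ≫ (ρ_ (S.F.obj X)).hom = 𝟙 (S.F.obj X))
    ∧ ((ρ_ (S.F.obj (S.a X))).inv ≫ (S.F.obj (S.a X) ◁ S.toLLData.coev X) ≫
        (α_ (S.F.obj (S.a X)) (S.F.obj X) (S.F.obj (S.a X))).inv ≫
        (S.toLLData.ev X ▷ S.F.obj (S.a X)) ≫ (λ_ (S.F.obj (S.a X))).hom
          = 𝟙 (S.F.obj (S.a X))) := by
  constructor
  · rw [LLData.coev, comp_whiskerRight_assoc, claim1 S X]
    have key : ((Functor.Monoidal.μIso S.F X (S.a X)).inv ▷ S.F.obj X) ≫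
        (Functor.LaxMonoidal.μ S.F X (S.a X) ▷ S.F.obj X) = 𝟙 _ := by
      rw [← comp_whiskerRight, Functor.Monoidal.μIso_inv, Functor.Monoidal.δ_μ,
        MonoidalCategory.id_whiskerRight]
    rw [reassoc_of% key, S.P4l]
  · rw [LLData.coev, MonoidalCategory.whiskerLeft_comp_assoc, claim2 S X]
    have key : (S.F.obj (S.a X) ◁ (Functor.Monoidal.μIso S.F X (S.a X)).inv) ≫
        (S.F.obj (S.a X) ◁ Functor.LaxMonoidal.μ S.F X (S.a X)) = 𝟙 _ := by
      rw [← MonoidalCategory.whiskerLeft_comp, Functor.Monoidal.μIso_inv, Functor.Monoidal.δ_μ,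
        MonoidalCategory.whiskerLeft_id]
    rw [reassoc_of% key, S.P4r]
end

section
/- Abstract Lefschetz formula: with the data and properties (P1)–(P5) of the general framework, for any morphism λ : k → L(X ⊗ X^a) in D^b(k), define Φ_λ : L(X) → L(X) as the composite L(X) ≅ k ⊗^L L(X) → L(X ⊗ X^a) ⊗^L L(X) → L(X) via λ ⊗ id and ∪_X. Then the categorical trace of Φ_λ in D^b(k) equals the composite k → L(X ⊗ X^a) → L(X^a ⊗ X), paired against L_{Δ_X} via ∪_{X^a⊗X}; i.e., tr(Φ_λ) = L_{Δ_X} ∪_{X^a⊗X} L(σ)λ. -/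
open CategoryTheory MonoidalCategory Category

universe v₁ v₂ u₁ u₂

variable (C : Type u₁) (D : Type u₂) [Category.{v₁} C] [Category.{v₂} D]
  [MonoidalCategory C] [SymmetricCategory C] [MonoidalCategory D] [SymmetricCategory D]

variable {C D}

variable (C D)

variable {C D}

/-!
STATEMENT 12 (Theorem 2.13 of the paper, first formula): given the framework with
properties (P1)–(P5), for any `λ : k ⟶ L(X ⊗ X^a)`, the categorical trace of
`Φ_λ : L(X) ⟶ L(X)` equals `L_{Δ_X} ∪_{X^a ⊗ X} L(σ)λ`.
-/
section AuxLemmas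

open Functor.LaxMonoidal Functor.OplaxMonoidal Functor.Monoidal

variable (S : LLFramework C D)

lemma aux_rInv_r (X : C) : S.toLLData.rInv X ≫ S.toLLData.r X = 𝟙 _ := by
  rw [LLData.rInv, LLData.r, ← Functor.map_comp]
  simp

lemma aux_lInv_l (X : C) : S.toLLData.lInv X ≫ S.toLLData.l X = 𝟙 _ := by
  rw [LLData.lInv, LLData.l, ← Functor.map_comp]
  simp

/-- `(l ▷ _) ≫ cup = cupXa ≫ l`. -/
lemma aux_l_cup (X : C) :
    (S.toLLData.l X ▷ S.F.obj (X ⊗ S.a X)) ≫ S.cup (𝟙_ C) X X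
      = S.toLLData.cupXa X ≫ S.toLLData.l X := by
  simp only [LLData.cupXa, Category.assoc, aux_lInv_l, Category.comp_id]

/-- `(_ ◁ r) ≫ cup = cupX ≫ r`. -/
lemma aux_r_cup (X : C) :
    (S.F.obj (X ⊗ S.a X) ◁ S.toLLData.r X) ≫ S.cup X X (𝟙_ C)
      = S.toLLData.cupX X ≫ S.toLLData.r X := by
  simp only [LLData.cupX, Category.assoc, aux_rInv_r, Category.comp_id]

/-- Right unit property of `LΔ` for `cup 1 X X`, derived from (P4r). -/
lemma aux_unit1 (X : C) :
    (ρ_ (S.F.obj (𝟙_ C ⊗ S.a X))).inv ≫ (S.F.obj (𝟙_ C ⊗ S.a X) ◁ S.LΔ X) ≫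
      S.cup (𝟙_ C) X X = 𝟙 _ := by
  have h4 := S.P4r X
  have h : (ρ_ (S.F.obj (S.a X))).inv ≫ (S.F.obj (S.a X) ◁ S.LΔ X) ≫
      (S.toLLData.l X ▷ S.F.obj (X ⊗ S.a X)) ≫ S.cup (𝟙_ C) X X = S.toLLData.l X := by
    have h' := congrArg (fun t => t ≫ S.toLLData.l X) h4
    simpa only [LLData.cupXa, Category.assoc, aux_lInv_l, Category.comp_id,
      Category.id_comp] using h'
  haveI : IsIso (S.toLLData.l X) := by rw [LLData.l]; infer_instance
  rw [← cancel_epi (S.toLLData.l X), Category.comp_id,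
    rightUnitor_inv_naturality_assoc, ← whisker_exchange_assoc]
  exact h

/-- Right unit property of `LΔ` for `cup X X X`. -/
lemma aux_unit3 (X : C) :
    (ρ_ (S.F.obj (X ⊗ S.a X))).inv ≫ (S.F.obj (X ⊗ S.a X) ◁ S.LΔ X) ≫
      S.cup X X X = 𝟙 _ := by
  have hμ := S.P1 X X
  rw [← cancel_epi (μ S.F X (S.a X)), Category.comp_id,
    rightUnitor_inv_naturality_assoc, ← whisker_exchange_assoc, ← hμ]
  rw [comp_whiskerRight]
  simp only [Category.assoc]
  rw [whisker_exchange_assoc, ← rightUnitor_inv_naturality_assoc,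
    S.P2 X (𝟙_ C) X X, associator_naturality_right_assoc, rightUnitor_tensor_inv]
  simp only [Category.assoc, Iso.inv_hom_id_assoc]
  rw [← MonoidalCategory.whiskerLeft_comp_assoc, ← MonoidalCategory.whiskerLeft_comp_assoc,
    Category.assoc, aux_unit1, MonoidalCategory.whiskerLeft_id, Category.id_comp]

/-- Pushing `∪_X` through `𝔎`, via (P1) and (P2). -/
lemma aux_cupX_mu (X : C) :
    (S.toLLData.cupX X ▷ S.F.obj (S.a X)) ≫ μ S.F X (S.a X)
      = (α_ (S.F.obj (X ⊗ S.a X)) (S.F.obj X) (S.F.obj (S.a X))).hom ≫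
          (S.F.obj (X ⊗ S.a X) ◁ μ S.F X (S.a X)) ≫ S.cup X X X := by
  have hμ := S.P1 X X
  rw [← hμ]
  rw [tensorHom_def_assoc (S.toLLData.r X) (S.toLLData.l X),
    ← comp_whiskerRight_assoc, ← aux_r_cup, comp_whiskerRight]
  simp only [Category.assoc]
  rw [← whisker_exchange_assoc, S.P2 X X (𝟙_ C) X,
    associator_naturality_right_assoc, associator_naturality_middle_assoc]
  simp only [MonoidalCategory.whiskerLeft_comp, Category.assoc, MonoidalCategory.tensorHom_def]

/-- The key computation for the left-hand side of the trace formula. -/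
lemma aux_tracearg (X : C) (lam : 𝟙_ D ⟶ S.F.obj (X ⊗ S.a X)) :
    S.LΔ X ≫ δ S.F X (S.a X) ≫ (S.toLLData.Φ X lam ▷ S.F.obj (S.a X)) ≫
      μ S.F X (S.a X) = lam := by
  rw [LLData.Φ]
  simp only [comp_whiskerRight, Category.assoc]
  rw [aux_cupX_mu, associator_naturality_left_assoc, ← leftUnitor_tensor_inv_assoc,
    leftUnitor_inv_naturality_assoc, whisker_exchange_assoc,
    ← MonoidalCategory.whiskerLeft_comp_assoc, δ_μ, MonoidalCategory.whiskerLeft_id,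
    Category.id_comp, leftUnitor_inv_naturality_assoc, whisker_exchange_assoc,
    unitors_inv_equal, ← rightUnitor_inv_naturality_assoc, aux_unit3, Category.comp_id]

/-- Reformulation of the right-hand side using (P5). -/
lemma aux_rhs (X : C) (g : 𝟙_ D ⟶ S.F.obj (S.a X ⊗ X)) :
    (λ_ (𝟙_ D)).inv ≫ (S.LΔ X ⊗ₘ g) ≫ S.toLLData.cupPair X
      = g ≫ δ S.F (S.a X) X ≫ S.toLLData.ev X := by
  rw [← S.P5 X]
  rw [tensorHom_def_assoc (S.LΔ X) g,
    tensorHom_def_assoc (S.LΔ X) (μ S.F (S.a X) X),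
    leftUnitor_inv_naturality_assoc, leftUnitor_inv_naturality_assoc,
    whisker_exchange_assoc, whisker_exchange_assoc,
    ← MonoidalCategory.whiskerLeft_comp_assoc
      (S.F.obj (X ⊗ S.a X)) (δ S.F (S.a X) X) (μ S.F (S.a X) X),
    δ_μ, MonoidalCategory.whiskerLeft_id, Category.id_comp]

end AuxLemmas

open Functor.LaxMonoidal Functor.OplaxMonoidal Functor.Monoidal in
theorem lefschetz_lunts_stmt12 (S : LLFramework C D) (X : C)
    (lam : 𝟙_ D ⟶ S.F.obj (X ⊗ S.a X)) :
    S.toLLData.tr X (S.toLLData.Φ X lam)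
      = (λ_ (𝟙_ D)).inv ≫ (S.LΔ X ⊗ₘ (lam ≫ S.F.map (β_ X (S.a X)).hom)) ≫
          S.toLLData.cupPair X := by
  rw [aux_rhs S X (lam ≫ S.F.map (β_ X (S.a X)).hom)]
  simp only [LLData.tr, LLData.coev, Functor.Monoidal.μIso_inv, Category.assoc]
  calc S.LΔ X ≫ δ S.F X (S.a X) ≫ (S.toLLData.Φ X lam ▷ S.F.obj (S.a X)) ≫
        (β_ (S.F.obj X) (S.F.obj (S.a X))).hom ≫ S.toLLData.ev X
      = (S.LΔ X ≫ δ S.F X (S.a X) ≫ (S.toLLData.Φ X lam ▷ S.F.obj (S.a X)) ≫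
          μ S.F X (S.a X)) ≫ δ S.F X (S.a X) ≫
          (β_ (S.F.obj X) (S.F.obj (S.a X))).hom ≫ S.toLLData.ev X := by
        simp only [Category.assoc, Functor.Monoidal.μ_δ_assoc]
    _ = lam ≫ δ S.F X (S.a X) ≫ (β_ (S.F.obj X) (S.F.obj (S.a X))).hom ≫
          S.toLLData.ev X := by rw [aux_tracearg]
    _ = lam ≫ S.F.map (β_ X (S.a X)).hom ≫ δ S.F (S.a X) X ≫ S.toLLData.ev X := by
        rw [Functor.map_braiding]
        simp only [Category.assoc, Functor.Monoidal.μ_δ_assoc]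
end
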